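/- Let F ⊆ {−1,1}^s with (1,...,1) ∈ F, and suppose that for every nonempty I ⊆ {1,...,s} there exists x ∈ F with ∏_{i∈I} x_i = −1 (i.e., F is affinely full-dimensional). Then the design matrix M of F has linearly independent columns over the rationals; equivalently, MᵀM is nonsingular and the parameters of the main-effect linear model are simultaneously identifiable. -/

import Mathlib

/-!
Write `x = 1 - 2 m(x)` with `m(x) ∈ {0,1}^s` the indicator of the `-1` entries. Comparing a
relation `a + ∑ dᵢ xᵢ = 0` on `F` with its value at the all-ones point gives
`∑ dᵢ m(x)ᵢ = 0` for every `x ∈ F`. If `d ≠ 0`, rescale it to an integer vector with an odd entry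
and let `I` be its set of odd coordinates. Reducing the relation modulo 2 at a point `x ∈ F` with
`∏_{i ∈ I} xᵢ = -1`, i.e. with an odd number of `-1` entries in `I`, gives `1 = 0` in `ZMod 2`.
-/

open Finset Matrix

def IsAffinelyFullDimensional {ι : Type*} (S : Set (ι → ℚ)) : Prop :=
  ∀ I : Finset ι, I.Nonempty → ∃ x ∈ S, ∏ i ∈ I, x i = -1

theorem prod_eq_neg_one_pow_card_filter {ι R : Type*} [CommRing R] [DecidableEq R]
    {x : ι → R} (hx : ∀ i, x i = 1 ∨ x i = -1) (I : Finset ι) :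
    ∏ i ∈ I, x i = (-1) ^ #{i ∈ I | x i = -1} := by
  rw [← prod_const, prod_filter]
  exact prod_congr rfl fun i _ => by rcases hx i with h | h <;> simp [h]

theorem sum_mul_eq_sum_sub_two_mul_sum_filter {ι R : Type*} [Fintype ι] [CommRing R]
    [DecidableEq R] {x : ι → R} (hx : ∀ i, x i = 1 ∨ x i = -1) (d : ι → R) :
    ∑ i, d i * x i = ∑ i, d i - 2 * ∑ i with x i = -1, d i := by
  rw [sum_filter, mul_sum, ← sum_sub_distrib]
  refine sum_congr rfl fun i _ => ?_
  by_cases h : x i = -1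
  · simp only [h, if_true]; ring
  · rw [if_neg h, (hx i).resolve_right h]; ring

theorem exists_ne_zero_mul_eq_intCast_odd {ι : Type*} [Fintype ι] (d : ι → ℚ) (hd : d ≠ 0) :
    ∃ q : ℚ, q ≠ 0 ∧ ∃ f : ι → ℤ, (∃ i, Odd (f i)) ∧ ∀ i, q * d i = f i := by
  classical
  obtain ⟨⟨b, hb⟩, hbd⟩ := IsLocalization.exist_integer_multiples (nonZeroDivisors ℤ) univ d
  choose e he using fun i => hbd i (mem_univ i)
  obtain ⟨i₀, hi₀⟩ := Function.ne_iff.mp hd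
  obtain ⟨f, hef, hf⟩ := extract_gcd e (univ_nonempty_iff.mpr ⟨i₀⟩)
  have hb0 : (b : ℚ) ≠ 0 := by exact_mod_cast nonZeroDivisors.ne_zero hb
  have hg : univ.gcd e ≠ 0 := fun hg => by
    have he₀ := he i₀
    rw [Finset.gcd_eq_zero_iff.mp hg i₀ (mem_univ _), map_zero, eq_comm, smul_eq_zero] at he₀
    exact he₀.elim (nonZeroDivisors.ne_zero hb) hi₀
  refine ⟨b / univ.gcd e, div_ne_zero hb0 (by exact_mod_cast hg), f, ?_, fun i => ?_⟩
  · by_contra! heven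
    have : (2 : ℤ) ∣ univ.gcd f := dvd_gcd fun i _ => (Int.not_odd_iff_even.mp (heven i)).two_dvd
    norm_num [hf] at this
  · have := he i
    rw [hef i (mem_univ i)] at this
    simp only [algebraMap_int_eq, eq_intCast, Int.cast_mul, zsmul_eq_mul] at this
    field_simp
    linarith

theorem even_of_sum_filter_eq_zero {ι : Type*} [Fintype ι] {S : Set (ι → ℚ)}
    (hpm : ∀ x ∈ S, ∀ i, x i = 1 ∨ x i = -1) (hS : IsAffinelyFullDimensional S)
    {f : ι → ℤ} (hf : ∀ x ∈ S, ∑ i with x i = -1, f i = 0) (i : ι) : Even (f i) := by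
  classical
  by_contra hi
  set I : Finset ι := {i | ¬Even (f i)}
  obtain ⟨x, hxS, hx⟩ := hS I ⟨i, by simpa [I] using hi⟩
  have hodd : Odd #{i ∈ I | x i = -1} := by
    rwa [prod_eq_neg_one_pow_card_filter (hpm x hxS),
      neg_one_pow_eq_neg_one_iff_odd (by norm_num)] at hx
  have hcount : ∑ i with x i = -1, (f i : ZMod 2) = #{i ∈ I | x i = -1} := by
    rw [filter_filter, card_eq_sum_ones, Nat.cast_sum, sum_filter, sum_filter]
    refine sum_congr rfl fun j _ => ?_
    by_cases hj : Even (f j) <;> by_cases hxj : x j = -1 <;>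
      simp_all [I, ZMod.intCast_eq_zero_iff_even, ZMod.intCast_eq_one_iff_odd]
  have hzero : ∑ i with x i = -1, (f i : ZMod 2) = 0 := by
    exact_mod_cast congrArg (Int.cast (R := ZMod 2)) (hf x hxS)
  rw [hzero, eq_comm, ZMod.natCast_eq_zero_iff_even] at hcount
  exact Nat.not_even_iff_odd.mpr hodd hcount

theorem eq_zero_of_sum_filter_eq_zero {ι : Type*} [Fintype ι] {S : Set (ι → ℚ)}
    (hpm : ∀ x ∈ S, ∀ i, x i = 1 ∨ x i = -1) (hS : IsAffinelyFullDimensional S)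
    {d : ι → ℚ} (hd : ∀ x ∈ S, ∑ i with x i = -1, d i = 0) : d = 0 := by
  by_contra hd0
  obtain ⟨q, hq, f, ⟨i, hi⟩, hqf⟩ := exists_ne_zero_mul_eq_intCast_odd d hd0
  have hf : ∀ x ∈ S, ∑ i with x i = -1, f i = 0 := fun x hx => by
    have : ((∑ i with x i = -1, f i : ℤ) : ℚ) = q * ∑ i with x i = -1, d i := by
      push_cast
      rw [mul_sum]
      exact sum_congr rfl fun i _ => (hqf i).symm
    rw [hd x hx, mul_zero] at this
    exact_mod_cast this
  exact Int.not_even_iff_odd.mpr hi (even_of_sum_filter_eq_zero hpm hS hf i)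

theorem eq_zero_of_affine_eq_zero {ι : Type*} [Fintype ι] {S : Set (ι → ℚ)}
    (hpm : ∀ x ∈ S, ∀ i, x i = 1 ∨ x i = -1) (hone : (fun _ => 1) ∈ S)
    (hS : IsAffinelyFullDimensional S) {a : ℚ} {d : ι → ℚ}
    (h : ∀ x ∈ S, a + ∑ i, d i * x i = 0) : a = 0 ∧ d = 0 := by
  have ha : a + ∑ i, d i = 0 := by simpa using h _ hone
  have hd : d = 0 := eq_zero_of_sum_filter_eq_zero hpm hS fun x hx => by
    have := h x hx
    rw [sum_mul_eq_sum_sub_two_mul_sum_filter (hpm x hx)] at this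
    linarith
  exact ⟨by simpa [hd] using ha, hd⟩

theorem Matrix.det_transpose_mul_self_ne_zero {m n R : Type*} [Fintype m] [Fintype n]
    [DecidableEq n] [Field R] [LinearOrder R] [IsStrictOrderedRing R] {A : Matrix m n R}
    (hA : LinearIndependent R Aᵀ) : (Aᵀ * A).det ≠ 0 := by
  have hinj : Function.Injective (Aᵀ * A).mulVecLin := by
    rw [← LinearMap.ker_eq_bot, ker_mulVecLin_transpose_mul_self, LinearMap.ker_eq_bot]
    exact mulVec_injective_iff.mpr hA
  exact (isUnit_iff_isUnit_det _).mp (mulVec_injective_iff_isUnit.mp hinj) |>.ne_zero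

/-- an affinely full-dimensional design has a design matrix with
linearly independent columns; in particular MᵀM is nonsingular. -/
theorem affinely_full_dimensional_identifiable (s : ℕ) (F : Finset (Fin s → ℚ))
    (hpm : ∀ x ∈ F, ∀ i, x i = 1 ∨ x i = -1)
    (hone : (fun _ => (1 : ℚ)) ∈ F)
    (hafd : ∀ I : Finset (Fin s), I.Nonempty → ∃ x ∈ F, ∏ i ∈ I, x i = -1)
    (M : Matrix F (Fin (s + 1)) ℚ)
    (hM : ∀ x j, M x j = Fin.cases 1 (fun i => (x : Fin s → ℚ) i) j) :
    LinearIndependent ℚ M.transpose ∧ (M.transpose * M).det ≠ 0 := by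
  have hli : LinearIndependent ℚ M.transpose := by
    refine Fintype.linearIndependent_iff.mpr fun c hc => ?_
    have hrel : ∀ x ∈ (F : Set (Fin s → ℚ)), c 0 + ∑ i, c i.succ * x i = 0 := fun x hx => by
      simpa [Fin.sum_univ_succ, hM] using congrFun hc ⟨x, hx⟩
    obtain ⟨h0, hsucc⟩ := eq_zero_of_affine_eq_zero hpm hone hafd hrel
    exact Fin.cases h0 (congrFun hsucc)
  exact ⟨hli, Matrix.det_transpose_mul_self_ne_zero hli⟩
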